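/- In the N_K=N setting, the super derivative of the odd binomial satisfies D^i_Z (Z-W)^{j|J} = σ(e_i, J∖e_i)(Z-W)^{j|J∖e_i} + j σ(e_i,J)(Z-W)^{j-1|J∪e_i} for all j ∈ ℤ, where D^i_Z = ∂_{θ^i} + θ^i ∂_z, (Z-W)^{j|J} = (z-w-Σ_k θ^kζ^k)^j ∏_{i∈J}(θ^i-ζ^i) (with negative powers expanded via the geometric series), and σ(e_i,K) is the Grassmann sign (zero if i∉K for the first term, i∈J makes second term zero). -/

import Mathlib

/-!
Write `(Z-W)^{j|J} = B_j · (θ-ζ)^J` with `B_j = Σ_r c_r (Σ_k θ^kζ^k)^r`, the `c_r` being the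
coefficients of the expansion of `(z - w - Σ_k θ^kζ^k)^j`. As `Σ_k θ^kζ^k` is even, hence central,
`D^i_Z (B_j y) = B_j ∂_{θ^i} y + j B_{j-1} (θ^i - ζ^i) y` for every `y`: the odd derivative of
`(Σθζ)^r` produces `-j B_{j-1} ζ^i` through `(r+1) C(j, r+1) = j C(j-1, r)`, and `θ^i ∂_z`
produces `j B_{j-1} θ^i` through `(j-r) C(j, r) = j C(j-1, r)`. Reindexing the first sum drops
the term `ζ^i (Σθζ)^N`, which vanishes because it has degree `2N+1` in an exterior algebra on
`2N` generators. It remains to see that `∂_{θ^i}` and left multiplication by `θ^i - ζ^i` send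
`(θ-ζ)^J` to `σ(e_i, J∖e_i) (θ-ζ)^{J∖e_i}` and `σ(e_i, J) (θ-ζ)^{J∪e_i}`.
-/

noncomputable section

/-- The Grassmann algebra on `k` groups of `N` odd generators (e.g. `θ`'s, `ζ`'s, `χ`'s),
modelled as an exterior algebra. -/
abbrev Gr (k N : ℕ) : Type := ExteriorAlgebra ℂ (Fin k × Fin N → ℂ)

/-- The `i`-th odd generator of the `g`-th group. -/
def gv {k N : ℕ} (g : Fin k) (i : Fin N) : Gr k N :=
  ExteriorAlgebra.ι ℂ (Pi.single (g, i) (1:ℂ))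

/-- The odd (left) derivative with respect to the `i`-th generator of group `g`,
realized as contraction in the exterior algebra. -/
def dgv {k N : ℕ} (g : Fin k) (i : Fin N) : Module.End ℂ (Gr k N) :=
  CliffordAlgebra.contractLeft (LinearMap.proj (g, i))

/-- Iterated odd derivative extracting the coefficient of the full top monomial of
group `g` (applying `∂_1` first, then `∂_2`, etc.). -/
def resG {k N : ℕ} (g : Fin k) : Module.End ℂ (Gr k N) :=
  (((List.finRange N).map (dgv g)).reverse).prod

/-- The reordering sign `σ(I,J)` determined by `θ^I θ^J = σ(I,J) θ^{I∪J}` for disjoint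
ordered subsets, and `0` otherwise. -/
def sgn {N : ℕ} (I J : Finset (Fin N)) : ℤ :=
  if Disjoint I J then (-1)^(((I ×ˢ J).filter (fun p => p.2 < p.1)).card) else 0

/-- Ordered (increasing) product of the elements `f i`, `i ∈ J`. -/
def oprod {k N : ℕ} (J : Finset (Fin N)) (f : Fin N → Gr k N) : Gr k N :=
  ((J.sort (· ≤ ·)).map f).prod

namespace Stmt18

variable {N : ℕ}

/-- Formal distributions in the two supervariables `Z, W`. -/
abbrev Dist2 (N : ℕ) : Type := ℤ → ℤ → Gr 2 N

/-- The generalized binomial coefficient `m(m-1)⋯(m-r+1)/r!` for `m ∈ ℤ`. -/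
def genChoose (m : ℤ) (r : ℕ) : ℂ :=
  (∏ t ∈ Finset.range r, ((m : ℂ) - t)) / (r.factorial : ℂ)

/-- Coefficient of `z^a w^b` in `i_{z,w}(z-w)^m` (expansion in `|z| > |w|`, i.e. the
geometric series in `w/z`). -/
def izwC (m : ℤ) (a b : ℤ) : ℂ :=
  if 0 ≤ b ∧ a + b = m then (-1 : ℂ)^(b.toNat) * genChoose m b.toNat else 0

/-- `Σ_i θ^i ζ^i`. -/
def qq (N : ℕ) : Gr 2 N := ∑ i : Fin N, gv 0 i * gv 1 i

/-- `(θ-ζ)^J`. -/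
def tK (J : Finset (Fin N)) : Gr 2 N := oprod J (fun i => gv 0 i - gv 1 i)

/-- The `N_K` binomial `(Z-W)^{j|J} = (z - w - Σθ^iζ^i)^j (θ-ζ)^J` for any `j ∈ ℤ`,
with negative powers expanded in the domain `|z| > |w|` (geometric series). -/
def izwNK (N : ℕ) (j : ℤ) (J : Finset (Fin N)) : Dist2 N :=
  fun a b => ∑ r ∈ Finset.range (N + 1),
    ((-1 : ℂ)^r * genChoose j r * izwC (j - r) a b) • ((qq N)^r * tK J)

/-- The super derivative `D^i_Z = ∂_{θ^i} + θ^i ∂_z` on distributions. -/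
def DZ (i : Fin N) (d : Dist2 N) : Dist2 N :=
  fun a b => dgv 0 i (d a b) + gv 0 i * (((a : ℂ) + 1) • d (a + 1) b)

end Stmt18

namespace ExteriorAlgebra

variable {R M : Type*} [CommRing R] [AddCommGroup M] [Module R M]

theorem commute_ι_mul_ι (x y : M) (a : ExteriorAlgebra R M) : Commute (ι R x * ι R y) a := by
  have anticomm (u v : M) : ι R u * ι R v = -(ι R v * ι R u) :=
    eq_neg_of_add_eq_zero_left (ι_add_mul_swap u v)
  induction a using CliffordAlgebra.induction with
  | algebraMap r => exact (Algebra.commutes r _).symm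
  | ι m =>
    change ι R x * ι R y * ι R m = ι R m * (ι R x * ι R y)
    rw [mul_assoc, anticomm y m, mul_neg, ← mul_assoc, anticomm x m, neg_mul, neg_neg, mul_assoc]
  | mul a b ha hb => exact ha.mul_right hb
  | add a b ha hb => exact ha.add_right hb

theorem exteriorPower_eq_bot_of_finrank_lt {K V : Type*} [Field K] [AddCommGroup V] [Module K V]
    [FiniteDimensional K V] {n : ℕ} (h : Module.finrank K V < n) : ⋀[K]^n V = ⊥ :=
  Submodule.finrank_eq_zero.mp (by rw [exteriorPower.finrank_eq, Nat.choose_eq_zero_of_lt h])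

end ExteriorAlgebra

namespace Stmt18

open Finset

variable {N : ℕ}

theorem dgv_ι_mul {k : ℕ} (g : Fin k) (i : Fin N) (v : Fin k × Fin N → ℂ) (y : Gr k N) :
    dgv g i (ExteriorAlgebra.ι ℂ v * y) = v (g, i) • y - ExteriorAlgebra.ι ℂ v * dgv g i y :=
  CliffordAlgebra.contractLeft_ι_mul _ _ _

theorem qq_commute (y : Gr 2 N) : Commute (qq N) y :=
  Commute.sum_left _ _ _ fun _ _ => ExteriorAlgebra.commute_ι_mul_ι _ _ y

theorem gv_mul_qq_pow (g : Fin 2) (i : Fin N) : gv g i * qq N ^ N = 0 := by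
  have hq : qq N ∈ LinearMap.range (ExteriorAlgebra.ι ℂ) ^ 2 :=
    Submodule.sum_mem _ fun k _ => by
      rw [pow_two]
      exact Submodule.mul_mem_mul (LinearMap.mem_range_self _ _) (LinearMap.mem_range_self _ _)
  have hmem : gv g i * qq N ^ N ∈ ⋀[ℂ]^(1 + 2 * N) (Fin 2 × Fin N → ℂ) := by
    change _ ∈ LinearMap.range (ExteriorAlgebra.ι ℂ) ^ (1 + 2 * N)
    rw [pow_add, pow_one, pow_mul]
    exact Submodule.mul_mem_mul (LinearMap.mem_range_self _ _) (Submodule.pow_mem_pow _ hq N)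
  rwa [ExteriorAlgebra.exteriorPower_eq_bot_of_finrank_lt (by simp), Submodule.mem_bot]
    at hmem

theorem dgv_qq_mul (i : Fin N) (y : Gr 2 N) :
    dgv 0 i (qq N * y) = gv 1 i * y + qq N * dgv 0 i y := by
  have hterm (k : Fin N) : dgv 0 i (gv 0 k * gv 1 k * y)
      = (if k = i then gv 1 i * y else 0) + gv 0 k * gv 1 k * dgv 0 i y := by
    rw [mul_assoc, gv, dgv_ι_mul, gv, dgv_ι_mul]
    by_cases hk : k = i
    · subst hk; simp [gv, mul_assoc]
    · simp [hk, Ne.symm hk, mul_assoc]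
  simp only [qq, sum_mul, map_sum, hterm, sum_add_distrib, sum_ite_eq', mem_univ,
    if_true]

theorem dgv_qq_pow_mul (i : Fin N) (r : ℕ) (y : Gr 2 N) :
    dgv 0 i (qq N ^ r * y)
      = (r : ℂ) • (qq N ^ (r - 1) * (gv 1 i * y)) + qq N ^ r * dgv 0 i y := by
  induction r generalizing y with
  | zero => simp
  | succ r ih =>
    rw [pow_succ, mul_assoc, ih, dgv_qq_mul, mul_add, ← mul_assoc (gv 1 i),
      ← (qq_commute (gv 1 i)).eq]
    cases r with
    | zero => simp
    | succ r => simp only [Nat.add_sub_cancel, pow_succ, mul_assoc]; push_cast; module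

def thetaSubZeta (i : Fin N) : Gr 2 N := gv 0 i - gv 1 i

theorem thetaSubZeta_eq_ι (i : Fin N) :
    thetaSubZeta i = ExteriorAlgebra.ι ℂ (Pi.single (0, i) 1 - Pi.single (1, i) 1) := by
  rw [thetaSubZeta, gv, gv, map_sub]

theorem thetaSubZeta_mul_self (i : Fin N) : thetaSubZeta i * thetaSubZeta i = 0 := by
  rw [thetaSubZeta_eq_ι]
  exact ExteriorAlgebra.ι_sq_zero _

theorem thetaSubZeta_mul_comm (a b : Fin N) :
    thetaSubZeta a * thetaSubZeta b = -(thetaSubZeta b * thetaSubZeta a) := by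
  rw [thetaSubZeta_eq_ι, thetaSubZeta_eq_ι]
  exact eq_neg_of_add_eq_zero_left (ExteriorAlgebra.ι_add_mul_swap _ _)

theorem dgv_thetaSubZeta_mul (i a : Fin N) (y : Gr 2 N) :
    dgv 0 i (thetaSubZeta a * y) = (if a = i then y else 0) - thetaSubZeta a * dgv 0 i y := by
  rw [thetaSubZeta_eq_ι, dgv_ι_mul]
  by_cases h : a = i
  · subst h; simp
  · simp [h, Ne.symm h]

theorem tK_empty : tK (∅ : Finset (Fin N)) = 1 := by
  simp [tK, oprod]

theorem tK_insert_of_forall_lt {a : Fin N} {J : Finset (Fin N)} (h : ∀ b ∈ J, a < b) :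
    tK (insert a J) = thetaSubZeta a * tK J := by
  rw [tK, oprod, sort_insert _ (fun b hb => (h b hb).le) fun ha => (h a ha).false]
  rfl

theorem sgn_singleton (i : Fin N) (J : Finset (Fin N)) :
    sgn {i} J = if i ∈ J then 0 else (-1) ^ #{b ∈ J | b < i} := by
  by_cases h : i ∈ J
  · rw [sgn, if_neg (disjoint_singleton_left.not.mpr (not_not.mpr h)), if_pos h]
  · rw [sgn, if_pos (disjoint_singleton_left.mpr h), if_neg h, singleton_product,
      filter_map, card_map]
    rfl

theorem sgn_singleton_mul_self {i : Fin N} {J : Finset (Fin N)} (h : i ∉ J) :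
    sgn {i} J * sgn {i} J = 1 := by
  rw [sgn_singleton, if_neg h, ← mul_pow]
  norm_num

theorem sgn_singleton_insert_of_lt {i a : Fin N} {J : Finset (Fin N)} (hai : a < i) (ha : a ∉ J) :
    sgn {i} (insert a J) = -sgn {i} J := by
  rw [sgn_singleton, sgn_singleton]
  by_cases hi : i ∈ J
  · simp [hi]
  · rw [if_neg (by simp [hi, hai.ne']), if_neg hi, filter_insert, if_pos hai,
      card_insert_of_notMem (by simp [ha]), pow_succ, mul_neg_one]

theorem thetaSubZeta_mul_tK (i : Fin N) (J : Finset (Fin N)) :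
    thetaSubZeta i * tK J = (sgn {i} J : ℂ) • tK (insert i J) := by
  induction J using induction_on_min with
  | empty =>
    rw [tK_insert_of_forall_lt (by simp), tK_empty]
    simp [sgn_singleton]
  | insert a J ha ih =>
    rcases lt_trichotomy i a with hia | rfl | hai
    · have hmin : ∀ b ∈ insert a J, i < b := by
        simpa [hia] using fun b hb => hia.trans (ha b hb)
      rw [← tK_insert_of_forall_lt hmin, sgn_singleton, if_neg fun h => (hmin i h).false,
        filter_false_of_mem fun b hb => (hmin b hb).not_gt]
      simp
    · rw [tK_insert_of_forall_lt ha, ← mul_assoc, thetaSubZeta_mul_self, zero_mul, sgn_singleton,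
        if_pos (mem_insert_self _ _)]
      simp
    · have hmin : ∀ b ∈ insert i J, a < b := by simpa [hai] using ha
      rw [tK_insert_of_forall_lt ha, ← mul_assoc, thetaSubZeta_mul_comm, neg_mul, mul_assoc, ih,
        insert_comm, tK_insert_of_forall_lt hmin,
        sgn_singleton_insert_of_lt hai fun h => (ha a h).false]
      simp

theorem dgv_tK_of_notMem {i : Fin N} {J : Finset (Fin N)} (h : i ∉ J) : dgv 0 i (tK J) = 0 := by
  induction J using induction_on_min with
  | empty => rw [tK_empty]; exact CliffordAlgebra.contractLeft_one _ _
  | insert a J ha ih =>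
    rw [mem_insert, not_or] at h
    rw [tK_insert_of_forall_lt ha, dgv_thetaSubZeta_mul, if_neg (Ne.symm h.1), ih h.2]
    simp

theorem tK_of_mem {i : Fin N} {J : Finset (Fin N)} (h : i ∈ J) :
    tK J = (sgn {i} (J.erase i) : ℂ) • (thetaSubZeta i * tK (J.erase i)) := by
  rw [thetaSubZeta_mul_tK, insert_erase h, smul_smul, ← Int.cast_mul,
    sgn_singleton_mul_self (notMem_erase i J), Int.cast_one, one_smul]

theorem dgv_tK (i : Fin N) (J : Finset (Fin N)) :
    dgv 0 i (tK J) = if i ∈ J then (sgn {i} (J.erase i) : ℂ) • tK (J.erase i) else 0 := by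
  split_ifs with h
  · rw [tK_of_mem h, map_smul, dgv_thetaSubZeta_mul, if_pos rfl,
      dgv_tK_of_notMem (notMem_erase i J), mul_zero, sub_zero]
  · exact dgv_tK_of_notMem h

open Polynomial in
theorem genChoose_eq_descPochhammer (m : ℤ) (r : ℕ) :
    genChoose m r = (descPochhammer ℂ r).eval (m : ℂ) / r.factorial := by
  rw [genChoose, descPochhammer_eval_eq_prod_range]

open Polynomial in
theorem descPochhammer_succ_eval_eq_mul_eval_sub_one {R : Type*} [CommRing R] (r : ℕ) (x : R) :
    (descPochhammer R (r + 1)).eval x = x * (descPochhammer R r).eval (x - 1) := by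
  rw [descPochhammer_succ_left, eval_mul, eval_X, eval_comp, eval_sub, eval_X, eval_one]

theorem succ_mul_genChoose_succ (m : ℤ) (r : ℕ) :
    ((r : ℂ) + 1) * genChoose m (r + 1) = m * genChoose (m - 1) r := by
  rw [genChoose_eq_descPochhammer, genChoose_eq_descPochhammer,
    descPochhammer_succ_eval_eq_mul_eval_sub_one, Nat.factorial_succ]
  push_cast
  field_simp

theorem genChoose_mul_sub (m : ℤ) (r : ℕ) :
    genChoose m r * (m - r) = m * genChoose (m - 1) r := by
  rw [genChoose_eq_descPochhammer, genChoose_eq_descPochhammer, div_mul_eq_mul_div,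
    ← descPochhammer_succ_eval, descPochhammer_succ_eval_eq_mul_eval_sub_one]
  push_cast
  ring

theorem add_one_mul_izwC_succ (m a b : ℤ) :
    ((a : ℂ) + 1) * izwC m (a + 1) b = m * izwC (m - 1) a b := by
  unfold izwC
  by_cases hc : 0 ≤ b ∧ a + b = m - 1
  · rw [if_pos (by omega), if_pos hc]
    obtain ⟨B, rfl⟩ := Int.eq_ofNat_of_zero_le hc.1
    have ha : (a : ℂ) + 1 = m - B := by exact_mod_cast (by omega : a + 1 = m - B)
    rw [Int.toNat_natCast, ha]
    linear_combination (-1 : ℂ) ^ B * genChoose_mul_sub m B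
  · rw [if_neg (by omega), if_neg hc, mul_zero, mul_zero]

-- the coefficient of `z^a w^b (Σ_k θ^kζ^k)^r` in `(z - w - Σ_k θ^kζ^k)^j`
def izwCoeff (j a b : ℤ) (r : ℕ) : ℂ := (-1) ^ r * genChoose j r * izwC (j - r) a b

theorem add_one_mul_izwCoeff_succ_left (j a b : ℤ) (r : ℕ) :
    ((a : ℂ) + 1) * izwCoeff j (a + 1) b r = j * izwCoeff (j - 1) a b r := by
  have h := add_one_mul_izwC_succ (j - r) a b
  rw [show j - r - 1 = j - 1 - r by ring] at h
  unfold izwCoeff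
  push_cast at h
  linear_combination (-1 : ℂ) ^ r * genChoose j r * h
    + (-1 : ℂ) ^ r * izwC (j - 1 - r) a b * genChoose_mul_sub j r

theorem add_one_mul_izwCoeff_succ_right (j a b : ℤ) (r : ℕ) :
    ((r : ℂ) + 1) * izwCoeff j a b (r + 1) = -(j * izwCoeff (j - 1) a b r) := by
  unfold izwCoeff
  rw [show j - (r + 1 : ℕ) = j - 1 - r by push_cast; ring, pow_succ]
  linear_combination -(-1 : ℂ) ^ r * izwC (j - 1 - r) a b * succ_mul_genChoose_succ j r

-- `binomMul N j y = (Z-W)^{j|∅} · y`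
def binomMul (N : ℕ) (j : ℤ) : Gr 2 N →ₗ[ℂ] Dist2 N :=
  LinearMap.pi fun a => LinearMap.pi fun b =>
    ∑ r ∈ range (N + 1), izwCoeff j a b r • LinearMap.mulLeft ℂ (qq N ^ r)

theorem binomMul_apply (j : ℤ) (y : Gr 2 N) (a b : ℤ) :
    binomMul N j y a b = ∑ r ∈ range (N + 1), izwCoeff j a b r • (qq N ^ r * y) := by
  simp [binomMul]

theorem izwNK_eq_binomMul (j : ℤ) (J : Finset (Fin N)) : izwNK N j J = binomMul N j (tK J) := by
  ext a b
  rw [binomMul_apply]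
  rfl

theorem sum_izwCoeff_mul_qq_pow_pred (j a b : ℤ) {x : Gr 2 N} (hx : qq N ^ N * x = 0) :
    ∑ r ∈ range (N + 1), (izwCoeff j a b r * r) • (qq N ^ (r - 1) * x)
      = -(j : ℂ) • binomMul N (j - 1) x a b := by
  rw [binomMul_apply, sum_range_succ', sum_range_succ, hx, smul_zero, add_zero, smul_sum,
    Nat.cast_zero, mul_zero, zero_smul, add_zero]
  refine sum_congr rfl fun r _ => ?_
  rw [Nat.add_sub_cancel, smul_smul, Nat.cast_succ, mul_comm, add_one_mul_izwCoeff_succ_right]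
  ring_nf

theorem dgv_binomMul_apply (i : Fin N) (j : ℤ) (y : Gr 2 N) (a b : ℤ) :
    dgv 0 i (binomMul N j y a b)
      = binomMul N j (dgv 0 i y) a b - (j : ℂ) • binomMul N (j - 1) (gv 1 i * y) a b := by
  have hζ : qq N ^ N * (gv 1 i * y) = 0 := by
    rw [← mul_assoc, ((qq_commute (gv 1 i)).pow_left N).eq, gv_mul_qq_pow, zero_mul]
  simp only [binomMul_apply _ y, map_sum, map_smul, dgv_qq_pow_mul, smul_add, smul_smul,
    sum_add_distrib, sum_izwCoeff_mul_qq_pow_pred j a b hζ, binomMul_apply _ (dgv 0 i y)]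
  rw [neg_smul]
  abel

theorem gv_mul_add_one_smul_binomMul_apply_succ (i : Fin N) (j : ℤ) (y : Gr 2 N) (a b : ℤ) :
    gv 0 i * (((a : ℂ) + 1) • binomMul N j y (a + 1) b)
      = (j : ℂ) • binomMul N (j - 1) (gv 0 i * y) a b := by
  simp only [binomMul_apply, smul_sum, mul_sum, smul_smul, mul_smul_comm,
    add_one_mul_izwCoeff_succ_left]
  refine sum_congr rfl fun r _ => ?_
  rw [← mul_assoc, ← ((qq_commute (gv 0 i)).pow_left r).eq, mul_assoc]

theorem DZ_binomMul (i : Fin N) (j : ℤ) (y : Gr 2 N) :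
    DZ i (binomMul N j y)
      = binomMul N j (dgv 0 i y) + (j : ℂ) • binomMul N (j - 1) (thetaSubZeta i * y) := by
  ext a b
  rw [DZ, dgv_binomMul_apply, gv_mul_add_one_smul_binomMul_apply_succ, thetaSubZeta, sub_mul,
    map_sub]
  simp only [Pi.add_apply, Pi.smul_apply, Pi.sub_apply]
  module

/-- In the `N_K = N` setting, the super derivative of the odd binomial satisfies
`D^i_Z (Z-W)^{j|J} = σ(e_i, J∖e_i)(Z-W)^{j|J∖e_i} + j σ(e_i,J)(Z-W)^{j-1|J∪e_i}`
for all `j ∈ ℤ` (the first term being zero when `i ∉ J`, and `σ(e_i,J) = 0` when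
`i ∈ J`). -/
theorem stmt18 (N : ℕ) (i : Fin N) (j : ℤ) (J : Finset (Fin N)) :
    DZ i (izwNK N j J)
      = (if i ∈ J then ((sgn {i} (J.erase i) : ℂ)) • izwNK N j (J.erase i) else 0)
        + ((j : ℂ) * (sgn {i} J : ℂ)) • izwNK N (j - 1) (insert i J) := by
  simp only [izwNK_eq_binomMul, DZ_binomMul, dgv_tK, thetaSubZeta_mul_tK, map_smul, smul_smul]
  split_ifs <;> simp

end Stmt18
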